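/- arXiv:2404.09347 — 3 statements merged into one kernel-verified Lean document; each statement's English description precedes it below -/
import Mathlib

section
/- For any matroid M = (E, r) on a finite ground set E and any real q ∉ {0, 1}, (χ_{M*}(q) / q^{r*(E)}) · (1/(1 − q^{-1}))^{|E|} = Σ_{A ⊆ E} (1/(1 − q))^{|E|−|A|} · χ_{M/A}(q), where M/A denotes the contraction of M by A and r*(E) = |E| − r(E). -/
/-!
Both sides equal `(1 - q)⁻¹ ^ |E| * ∑_C (-q) ^ |C| * q ^ (r(E) - r(C))`.
On the left, substitute `A ↦ Aᶜ` in `χ_{M*}` and use `r*(E) - r*(Aᶜ) = |A| - r(A)`.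
On the right, group the pairs `(A, B)` with `B ⊆ Aᶜ` by `C = A ∪ B`: the inner sum over `A ⊆ C`
is the binomial expansion `∑_{A ⊆ C} y ^ |Aᶜ| (-1) ^ |C \ A| = y ^ |Cᶜ| (1 - y) ^ |C|`,
and `y = 1 / (1 - q)` satisfies `1 - y = -q y`.
-/

open Finset

/-- A matroid on a finite ground set `E`, given by its rank function. -/
structure FinMatroid (E : Type*) [Fintype E] [DecidableEq E] where
  rk : Finset E → ℕ
  rk_le_card : ∀ A, rk A ≤ A.card
  rk_mono : ∀ ⦃A B : Finset E⦄, A ⊆ B → rk A ≤ rk B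
  rk_submod : ∀ A B, rk (A ∪ B) + rk (A ∩ B) ≤ rk A + rk B

namespace FinMatroid

variable {E : Type*} [Fintype E] [DecidableEq E] (M : FinMatroid E)

/-- The rank function of the dual matroid: `r*(A) = r(E \ A) + |A| - r(E)`. -/
def dualRk (A : Finset E) : ℕ := M.rk Aᶜ + A.card - M.rk univ

/-- The characteristic polynomial `χ_M(x) = ∑_{A ⊆ E} (-1)^{|A|} x^{r(E) - r(A)}`. -/
def charPoly (x : ℝ) : ℝ :=
  ∑ A : Finset E, (-1 : ℝ) ^ A.card * x ^ (M.rk univ - M.rk A)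

/-- The characteristic polynomial of the dual matroid `M*`. -/
def dualCharPoly (x : ℝ) : ℝ :=
  ∑ A : Finset E, (-1 : ℝ) ^ A.card * x ^ (M.dualRk univ - M.dualRk A)

/-- The characteristic polynomial of the restriction `M|A`. -/
def restrictCharPoly (A : Finset E) (x : ℝ) : ℝ :=
  ∑ B ∈ A.powerset, (-1 : ℝ) ^ B.card * x ^ (M.rk A - M.rk B)

/-- The characteristic polynomial of the contraction `M/A`:
its ground set is `Aᶜ`, its rank function is `B ↦ r(A ∪ B) - r(A)`, so the
exponent `r_{M/A}(Aᶜ) - r_{M/A}(B)` equals `r(E) - r(A ∪ B)`. -/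
def contractCharPoly (A : Finset E) (x : ℝ) : ℝ :=
  ∑ B ∈ Aᶜ.powerset, (-1 : ℝ) ^ B.card * x ^ (M.rk univ - M.rk (A ∪ B))

/-- The Tutte polynomial `T_M(x,y) = ∑_{A ⊆ E} (x-1)^{r(E)-r(A)} (y-1)^{|A|-r(A)}`. -/
def tutte (x y : ℝ) : ℝ :=
  ∑ A : Finset E, (x - 1) ^ (M.rk univ - M.rk A) * (y - 1) ^ (A.card - M.rk A)

/-- The Tutte polynomial of the dual matroid `M*`. -/
def dualTutte (x y : ℝ) : ℝ :=
  ∑ A : Finset E, (x - 1) ^ (M.dualRk univ - M.dualRk A) * (y - 1) ^ (A.card - M.dualRk A)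

/-- The Tutte polynomial of the restriction `M|A`. -/
def restrictTutte (A : Finset E) (x y : ℝ) : ℝ :=
  ∑ B ∈ A.powerset, (x - 1) ^ (M.rk A - M.rk B) * (y - 1) ^ (B.card - M.rk B)

/-- The Tutte polynomial of the contraction `M/A` (ground set `Aᶜ`,
rank function `B ↦ r(A ∪ B) - r(A)`). -/
def contractTutte (A : Finset E) (x y : ℝ) : ℝ :=
  ∑ B ∈ Aᶜ.powerset,
    (x - 1) ^ ((M.rk univ - M.rk A) - (M.rk (A ∪ B) - M.rk A)) *
      (y - 1) ^ (B.card - (M.rk (A ∪ B) - M.rk A))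

end FinMatroid

section Powerset

variable {α β : Type*} [Fintype α] [DecidableEq α]

theorem Finset.sum_sum_powerset_compl [AddCommMonoid β] (f : Finset α → Finset α → β) :
    ∑ A, ∑ B ∈ Aᶜ.powerset, f A B = ∑ C, ∑ A ∈ C.powerset, f A (C \ A) := by
  rw [sum_sigma', sum_sigma']
  refine sum_nbij' (fun p ↦ ⟨p.1 ∪ p.2, p.1⟩) (fun p ↦ ⟨p.2, p.1 \ p.2⟩) ?_ ?_ ?_ ?_ ?_ <;>
    simp only [mem_sigma, mem_univ, mem_powerset, true_and, Sigma.forall]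
  · exact fun _ _ _ ↦ subset_union_left
  · exact fun C A _ ↦ by simp [subset_compl_iff_disjoint_left, disjoint_sdiff]
  · intro A B hB
    rw [union_sdiff_cancel_left (subset_compl_iff_disjoint_right.mp hB).symm]
  · intro C A hA
    rw [union_sdiff_of_subset hA]
  · intro A B hB
    rw [union_sdiff_cancel_left (subset_compl_iff_disjoint_right.mp hB).symm]

theorem Finset.sum_powerset_pow_card_compl_mul_neg_one_pow [CommRing β] (y : β) (C : Finset α) :
    ∑ A ∈ C.powerset, y ^ #Aᶜ * (-1) ^ #(C \ A) = y ^ #Cᶜ * (1 - y) ^ #C := by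
  have hbinom := prod_add (fun _ ↦ (1 : β)) (fun _ ↦ -y) C
  simp only [prod_const, one_pow, one_mul] at hbinom
  rw [← sub_eq_add_neg] at hbinom
  rw [hbinom, mul_sum]
  refine sum_congr rfl fun A hA ↦ ?_
  have hcard : #Aᶜ = #Cᶜ + #(C \ A) := by
    have := card_le_univ C
    rw [card_compl, card_compl, card_sdiff_of_subset (mem_powerset.mp hA)]
    have := card_le_card (mem_powerset.mp hA)
    omega
  rw [hcard, pow_add]
  ring

end Powerset

namespace FinMatroid

variable {E : Type*} [Fintype E] [DecidableEq E] (M : FinMatroid E)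

theorem rk_empty : M.rk ∅ = 0 :=
  Nat.le_zero.mp (M.rk_le_card ∅)

theorem rk_univ_le_rk_compl_add_card (A : Finset E) : M.rk univ ≤ M.rk Aᶜ + #A := by
  have h := M.rk_submod A Aᶜ
  rw [union_compl, inter_compl, rk_empty] at h
  have := M.rk_le_card A
  omega

theorem dualRk_univ_sub_dualRk_compl (A : Finset E) :
    M.dualRk univ - M.dualRk Aᶜ = #A - M.rk A := by
  have h₁ := M.rk_univ_le_rk_compl_add_card Aᶜ
  have h₂ := M.rk_le_card A
  have h₃ := card_le_univ A
  rw [compl_compl] at h₁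
  simp only [dualRk, compl_univ, compl_compl, rk_empty, card_univ, card_compl] at h₁ ⊢
  omega

theorem dualCharPoly_eq_sum (x : ℝ) :
    M.dualCharPoly x = ∑ A, (-1) ^ #Aᶜ * x ^ (#A - M.rk A) := by
  refine (Fintype.sum_bijective compl compl_involutive.bijective _ _ fun A ↦ ?_).symm
  rw [dualRk_univ_sub_dualRk_compl]

theorem sum_pow_card_compl_mul_contractCharPoly (x y : ℝ) :
    ∑ A, y ^ #Aᶜ * M.contractCharPoly A x =
      ∑ C, y ^ #Cᶜ * (1 - y) ^ #C * x ^ (M.rk univ - M.rk C) := by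
  simp only [contractCharPoly, mul_sum]
  rw [sum_sum_powerset_compl]
  refine sum_congr rfl fun C _ ↦ ?_
  rw [← sum_powerset_pow_card_compl_mul_neg_one_pow, sum_mul]
  refine sum_congr rfl fun A hA ↦ ?_
  rw [union_sdiff_of_subset (mem_powerset.mp hA)]
  ring

theorem dualCharPoly_div_mul_eq_sum {q : ℝ} (hq0 : q ≠ 0) (hq1 : q ≠ 1) :
    M.dualCharPoly q / q ^ (Fintype.card E - M.rk univ) * (1 / (1 - q⁻¹)) ^ Fintype.card E =
      ∑ C, (1 / (1 - q)) ^ #Cᶜ * (1 - 1 / (1 - q)) ^ #C * q ^ (M.rk univ - M.rk C) := by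
  have h1q : 1 - q ≠ 0 := sub_ne_zero.mpr hq1.symm
  rw [dualCharPoly_eq_sum, sum_div, sum_mul]
  refine sum_congr rfl fun A _ ↦ ?_
  have hAE := card_le_univ A
  rw [card_compl, pow_sub₀ _ (by norm_num) hAE, pow_sub₀ _ hq0 (M.rk_le_card A),
    pow_sub₀ _ hq0 ((M.rk_le_card univ).trans_eq card_univ),
    pow_sub₀ _ (one_div_ne_zero h1q) hAE, pow_sub₀ _ hq0 (M.rk_mono (subset_univ A))]
  field_simp
  have hsq (k : ℕ) : ((-1 : ℝ) ^ k) ^ 2 = 1 := by rw [← pow_mul, pow_mul', neg_one_sq, one_pow]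
  have hq : q / (q - 1) = -1 * (q / (1 - q)) := by rw [← neg_sub, div_neg]; ring
  rw [hq, sub_sub_cancel_left, neg_div, neg_eq_neg_one_mul, mul_pow, mul_pow]
  linear_combination (q ^ #A * (q / (1 - q)) ^ Fintype.card E * (1 / (1 - q)) ^ #A) *
      hsq (Fintype.card E) -
    (q ^ Fintype.card E * (1 / (1 - q)) ^ Fintype.card E * (q / (1 - q)) ^ #A) * hsq (#A)

end FinMatroid

/-- Matroid form of the Matiyasevich formula, contraction version:
`(χ_{M*}(q)/q^{r*(E)}) ζ_q(1)^{|E|} = ∑_{A ⊆ E} ζ_q(-1)^{|E|-|A|} χ_{M/A}(q)`,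
where `r*(E) = |E| - r(E)`, `ζ_q(-1) = 1/(1-q)` and `ζ_q(1) = 1/(1-q⁻¹)`. -/
theorem matiyasevich_contraction {E : Type*} [Fintype E] [DecidableEq E]
    (M : FinMatroid E) (q : ℝ) (hq0 : q ≠ 0) (hq1 : q ≠ 1) :
    M.dualCharPoly q / q ^ (Fintype.card E - M.rk Finset.univ) *
        (1 / (1 - q⁻¹)) ^ Fintype.card E =
      ∑ A : Finset E, (1 / (1 - q)) ^ (Fintype.card E - A.card) *
        M.contractCharPoly A q := by
  rw [M.dualCharPoly_div_mul_eq_sum hq0 hq1, ← M.sum_pow_card_compl_mul_contractCharPoly]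
  simp only [card_compl]
end

section
/- For any matroid M = (E, r), the convolution formula T_M(x, y) = Σ_{A ⊆ E} T_{M|A}(0, y) · T_{M/A}(x, 0) holds, where the sum is over all subsets A of E. -/
open Finset

/-! Write each term of `T_M(x, y)` as `g(B) h(B)` with the signed weights
`g(B) = (-1)^{r(B)} (y-1)^{|B|-r(B)}` and `h(D) = (-1)^{r(D)} (x-1)^{r(E)-r(D)}`.
Up to the common sign `(-1)^{r(A)}`, `T_{M|A}(0, y) = ∑_{B ⊆ A} g(B)` and
`T_{M/A}(x, 0) = ∑_{D ⊇ A} (-1)^{|D \ A|} h(D)`. Summing their product over `A` gives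
`∑_{B ⊆ D} g(B) h(D) ∑_{B ⊆ A ⊆ D} (-1)^{|D \ A|}`, and this inner sum, the Möbius function
of the Boolean lattice, vanishes unless `B = D`. -/

namespace Finset

variable {α R : Type*} [DecidableEq α] [CommRing R]

theorem sum_Icc_neg_one_pow_card_sdiff (s t : Finset α) :
    ∑ u ∈ Icc s t, (-1 : R) ^ #(t \ u) = if s = t then 1 else 0 := by
  by_cases hst : s ⊆ t
  · have hcompl :
        ∑ u ∈ Icc s t, (-1 : R) ^ #(t \ u) = ∑ v ∈ (t \ s).powerset, (-1 : R) ^ #v :=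
      sum_nbij' (t \ ·) (t \ ·)
        (fun u hu => mem_powerset.2 (sdiff_subset_sdiff subset_rfl (mem_Icc.1 hu).1))
        (fun v hv => mem_Icc.2 ⟨subset_sdiff.2
          ⟨hst, disjoint_of_subset_right (mem_powerset.1 hv) disjoint_sdiff⟩, sdiff_subset⟩)
        (fun u hu => sdiff_sdiff_eq_self (mem_Icc.1 hu).2)
        (fun v hv => sdiff_sdiff_eq_self ((mem_powerset.1 hv).trans sdiff_subset)) fun _ _ => rfl
    have hpow := congrArg (Int.cast : ℤ → R) (sum_powerset_neg_one_pow_card (x := t \ s))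
    push_cast at hpow
    rw [hcompl, hpow]
    exact if_congr (sdiff_eq_empty_iff_subset.trans ⟨hst.antisymm, fun h => h ▸ subset_rfl⟩)
      rfl rfl
  · rw [Icc_eq_empty hst, sum_empty, if_neg (by rintro rfl; exact hst subset_rfl)]

variable [Fintype α]

theorem sum_Ici_sum_Ici_neg_one_pow_card_sdiff_mul (f : Finset α → R) (s : Finset α) :
    ∑ u ∈ Ici s, ∑ t ∈ Ici u, (-1 : R) ^ #(t \ u) * f t = f s := by
  rw [sum_comm' (t' := Ici s) (s' := fun t => Icc s t) fun u t => by
    simp only [mem_Ici, mem_Icc, iff_self_and, and_imp]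
    exact le_trans]
  simp_rw [← sum_mul, sum_Icc_neg_one_pow_card_sdiff, ite_mul, one_mul, zero_mul]
  simp

theorem sum_sum_Iic_mul_sum_Ici_neg_one_pow (g h : Finset α → R) :
    ∑ u, (∑ s ∈ Iic u, g s) * ∑ t ∈ Ici u, (-1 : R) ^ #(t \ u) * h t = ∑ s, g s * h s := by
  simp_rw [sum_mul]
  rw [sum_comm' (t' := univ) (s' := Ici) (by intro u s; simp)]
  simp_rw [← mul_sum, sum_Ici_sum_Ici_neg_one_pow_card_sdiff_mul]

end Finset

theorem neg_one_pow_tsub {R : Type*} [Monoid R] [HasDistribNeg R] {m n : ℕ} (h : n ≤ m) :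
    (-1 : R) ^ (m - n) = (-1) ^ m * (-1) ^ n := by
  rw [← pow_add]
  exact neg_one_pow_congr (by rw [Nat.even_sub h, Nat.even_add])

namespace FinMatroid

variable {E : Type*} [Fintype E] [DecidableEq E] (M : FinMatroid E)

theorem rk_union_le_rk_add_card (A B : Finset E) : M.rk (A ∪ B) ≤ M.rk A + #B := by
  have := M.rk_submod A B
  have := M.rk_le_card B
  omega

theorem restrictTutte_zero_left (A : Finset E) (y : ℝ) :
    M.restrictTutte A 0 y =
      (-1) ^ M.rk A * ∑ B ∈ Iic A, (-1) ^ M.rk B * (y - 1) ^ (#B - M.rk B) := by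
  rw [restrictTutte, Iic_eq_powerset, mul_sum]
  refine sum_congr rfl fun B hB => ?_
  rw [zero_sub, neg_one_pow_tsub (M.rk_mono (mem_powerset.1 hB))]
  ring

theorem contractTutte_zero_right (A : Finset E) (x : ℝ) :
    M.contractTutte A x 0 = (-1) ^ M.rk A *
      ∑ D ∈ Ici A, (-1) ^ #(D \ A) * ((-1) ^ M.rk D * (x - 1) ^ (M.rk univ - M.rk D)) := by
  rw [contractTutte, mul_sum]
  have hdisj : ∀ B ∈ Aᶜ.powerset, Disjoint A B := fun B hB =>
    subset_compl_iff_disjoint_left.1 (mem_powerset.1 hB)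
  refine sum_nbij' (A ∪ ·) (· \ A) (by intro B; simp) (by intro D; simp)
    (fun B hB => union_sdiff_cancel_left (hdisj B hB)) (by intro D; simp) fun B hB => ?_
  have hle : M.rk A ≤ M.rk (A ∪ B) := M.rk_mono subset_union_left
  have hle' : M.rk (A ∪ B) ≤ M.rk univ := M.rk_mono (subset_univ _)
  have hcard := M.rk_union_le_rk_add_card A B
  have hexp : M.rk univ - M.rk A - (M.rk (A ∪ B) - M.rk A) = M.rk univ - M.rk (A ∪ B) := by omega
  rw [union_sdiff_cancel_left (hdisj B hB), zero_sub, hexp,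
    neg_one_pow_tsub (by omega : M.rk (A ∪ B) - M.rk A ≤ #B), neg_one_pow_tsub hle]
  ring

end FinMatroid

/-- The Kook–Reiner–Stanton convolution formula:
`T_M(x,y) = ∑_{A ⊆ E} T_{M|A}(0,y) T_{M/A}(x,0)`. -/
theorem tutte_convolution {E : Type*} [Fintype E] [DecidableEq E]
    (M : FinMatroid E) (x y : ℝ) :
    M.tutte x y = ∑ A : Finset E, M.restrictTutte A 0 y * M.contractTutte A x 0 := by
  have hsq (n : ℕ) : (-1 : ℝ) ^ n * (-1) ^ n = 1 := by
    rw [← pow_add]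
    exact Even.neg_one_pow ⟨n, rfl⟩
  calc M.tutte x y
      = ∑ B, ((-1) ^ M.rk B * (y - 1) ^ (#B - M.rk B)) *
          ((-1) ^ M.rk B * (x - 1) ^ (M.rk univ - M.rk B)) := by
        refine sum_congr rfl fun B _ => ?_
        rw [mul_mul_mul_comm, hsq, one_mul, mul_comm]
    _ = ∑ A, (∑ B ∈ Iic A, (-1) ^ M.rk B * (y - 1) ^ (#B - M.rk B)) *
          ∑ D ∈ Ici A, (-1) ^ #(D \ A) * ((-1) ^ M.rk D * (x - 1) ^ (M.rk univ - M.rk D)) :=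
        (sum_sum_Iic_mul_sum_Ici_neg_one_pow _ _).symm
    _ = ∑ A, M.restrictTutte A 0 y * M.contractTutte A x 0 := by
        refine sum_congr rfl fun A _ => ?_
        rw [M.restrictTutte_zero_left, M.contractTutte_zero_right, mul_mul_mul_comm, hsq, one_mul]
end

section
/- For n > 2, let N = n(n−1)/2 and N' = (n−1)(n−2)/2. The coefficient of x^{N'−k} in the flow polynomial F_{K_n}(x) equals (−1)^k · C(N, k) for every k with 0 ≤ k ≤ n − 3; in particular F_{K_n} is monic of degree N'. -/
open Finset

/-- The edge set of the complete graph `K_n`: unordered pairs, encoded as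
ordered pairs `(i, j)` with `i < j`. -/
def KEdge (n : ℕ) : Type := {p : Fin n × Fin n // p.1 < p.2}

instance (n : ℕ) : Fintype (KEdge n) := Subtype.fintype _
instance (n : ℕ) : DecidableEq (KEdge n) := Subtype.instDecidableEq

/-- The spanning subgraph of `K_n` with edge set `A`. -/
def graphOf (n : ℕ) (A : Finset (KEdge n)) : SimpleGraph (Fin n) where
  Adj i j := ∃ e ∈ A, (e.val = (i, j) ∨ e.val = (j, i))
  symm := by
    constructor
    intro i j ⟨e, he, h⟩
    exact ⟨e, he, h.symm⟩
  loopless := by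
    constructor
    rintro i ⟨e, he, h⟩
    rcases h with h | h <;>
      · have := e.property
        rw [h] at this
        exact lt_irrefl i this

/-- The rank function of the cycle matroid of `K_n`:
`r(A) = |V| - c(A)`, the number of vertices minus the number of connected
components of the spanning subgraph with edge set `A`. -/
noncomputable def cycleRk (n : ℕ) (A : Finset (KEdge n)) : ℕ :=
  n - Nat.card (graphOf n A).ConnectedComponent

/-- The rank function of the bond matroid (dual of the cycle matroid) of `K_n`. -/
noncomputable def bondRk (n : ℕ) (A : Finset (KEdge n)) : ℕ :=
  cycleRk n Aᶜ + A.card - cycleRk n univ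

/-- The flow polynomial of `K_n`, i.e. the characteristic polynomial of the
bond matroid of `K_n`, as a polynomial in `ℝ[x]`. -/
noncomputable def flowPolyKn (n : ℕ) : Polynomial ℝ :=
  ∑ A : Finset (KEdge n),
    ((-1 : ℝ) ^ A.card) • (Polynomial.X ^ (bondRk n univ - bondRk n A))

/-- `s(λ) = ∑_i λ_i (λ_i - 1) / 2` for a partition `λ`. -/
def partS (n : ℕ) (lam : n.Partition) : ℕ :=
  (lam.parts.map fun a => a * (a - 1) / 2).sum

/-- The Faà di Bruno coefficient `f(λ) = n! / (∏_i (i!)^{n_i} n_i!)`. -/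
def faaDiBruno (n : ℕ) (lam : n.Partition) : ℕ :=
  Nat.factorial n /
    ∏ i ∈ lam.parts.toFinset,
      (Nat.factorial i ^ lam.parts.count i * Nat.factorial (lam.parts.count i))

/-!
The coefficient of `x^(r*(E) - k)` in `F_{K_n}` collects the edge sets `A` whose bond rank
`r*(A) = |A| + 1 - c(K_n - A)` equals `k`. Deleting at most `n - 2` edges leaves `K_n` connected,
so then `r*(A) = |A|`. If instead `K_n - A` has `c ≥ 2` components, `A` contains the cut around
one of them; that cut has at least `n - 1` edges and its removal leaves at most two components, and
since each further deleted edge adds at most one component, `|A| ≥ n + c - 3`, i.e.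
`r*(A) ≥ n - 2`. So for `k ≤ n - 3` exactly the `k`-subsets of the `N` edges contribute, each
with sign `(-1)^k`; the case `k = 0` gives monicity.
-/

namespace SimpleGraph

variable {V : Type*} {G G' : SimpleGraph V} {a b : V}

lemma reachable_of_le_sup_edge (h : G' ≤ G ⊔ edge a b) {x y : V} (hxy : G'.Reachable x y) :
    G.Reachable x y ∨
      ((G.Reachable x a ∨ G.Reachable x b) ∧ (G.Reachable y a ∨ G.Reachable y b)) := by
  obtain ⟨p⟩ := hxy
  induction p with
  | nil => exact Or.inl .rfl
  | @cons x z y hadj _ ih =>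
    rcases h hadj with hG | hab
    · have hxz := hG.reachable
      rcases ih with hzy | ⟨hz, hy⟩
      · exact Or.inl (hxz.trans hzy)
      · exact Or.inr ⟨hz.imp hxz.trans hxz.trans, hy⟩
    · obtain ⟨⟨rfl, rfl⟩ | ⟨rfl, rfl⟩, -⟩ := (edge_adj _ _ _ _).1 hab
      · exact Or.inr ⟨Or.inl .rfl, ih.elim (fun hzy => Or.inr hzy.symm) And.right⟩
      · exact Or.inr ⟨Or.inr .rfl, ih.elim (fun hzy => Or.inl hzy.symm) And.right⟩

lemma card_connectedComponent_le_succ_of_le_sup_edge [Finite V] (hle : G ≤ G')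
    (h : G' ≤ G ⊔ edge a b) :
    Nat.card G.ConnectedComponent ≤ Nat.card G'.ConnectedComponent + 1 := by
  classical
  -- every component other than that of `b` survives in `G'`, merged at most with that of `a`
  let f (c : G.ConnectedComponent) : Option G'.ConnectedComponent :=
    if c = G.connectedComponentMk b then none else some (c.map (Hom.ofLE hle))
  have hf : f.Injective := by
    intro c d hcd
    induction c using ConnectedComponent.ind with | h x => ?_
    induction d using ConnectedComponent.ind with | h y => ?_
    by_cases hx : G.connectedComponentMk x = G.connectedComponentMk b <;>
      by_cases hy : G.connectedComponentMk y = G.connectedComponentMk b <;>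
      simp only [f, hx, hy, if_true, if_false, reduceCtorEq, Option.some.injEq,
        ConnectedComponent.map_mk, ConnectedComponent.eq] at hcd ⊢
    rw [ConnectedComponent.eq] at hx hy
    rcases reachable_of_le_sup_edge h hcd with hxy | ⟨hx' | hx', hy' | hy'⟩
    · exact hxy
    · exact hx'.trans hy'.symm
    · exact absurd hy' hy
    all_goals exact absurd hx' hx
  simpa using Nat.card_le_card_of_injective f hf

end SimpleGraph

lemma Nat.choose_two_add_one_sub {n : ℕ} (hn : 1 ≤ n) :
    n.choose 2 + 1 - n = (n - 1) * (n - 2) / 2 := by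
  obtain ⟨m, rfl⟩ : ∃ m, n = m + 1 := ⟨n - 1, by omega⟩
  have hsucc : (m + 1).choose 2 = m + m.choose 2 := by
    simpa using Nat.choose_succ_succ' m 1
  rw [hsucc, Nat.choose_two_right, Nat.add_sub_cancel, show m + 1 - 2 = m - 1 by omega]
  omega

namespace Polynomial

lemma coeff_sum_neg_one_pow_smul_X_pow_sub {α R : Type*} [Fintype α] [CommRing R]
    (r : Finset α → ℕ) {m k : ℕ} (hr : ∀ A, r A ≤ m) (hk : k ≤ m)
    (hrk : ∀ A, r A = k ↔ A.card = k) :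
    (∑ A : Finset α, (-1 : R) ^ A.card • (X ^ (m - r A) : R[X])).coeff (m - k) =
      (-1) ^ k * (Fintype.card α).choose k := by
  classical
  have hterm (A : Finset α) : ((-1 : R) ^ A.card • (X ^ (m - r A) : R[X])).coeff (m - k) =
      if A.card = k then (-1) ^ k else 0 := by
    rw [coeff_smul, coeff_X_pow]
    have : m - k = m - r A ↔ A.card = k := by
      rw [← hrk]
      have := hr A
      omega
    split_ifs <;> simp_all
  simp_rw [finsetSum_coeff, hterm]
  rw [← sum_filter, sum_const, ← powerset_univ, ← powersetCard_eq_filter, card_powersetCard,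
    card_univ, nsmul_eq_mul, mul_comm]

lemma natDegree_sum_smul_X_pow_sub_le {α R : Type*} [Fintype α] [CommRing R]
    (c : Finset α → R) (r : Finset α → ℕ) (m : ℕ) :
    (∑ A : Finset α, c A • (X ^ (m - r A) : R[X])).natDegree ≤ m := by
  refine natDegree_sum_le_of_forall_le _ _ fun A _ => (natDegree_smul_le _ _).trans ?_
  exact natDegree_X_pow_le _ |>.trans (Nat.sub_le _ _)

end Polynomial

section CompleteGraph

open SimpleGraph

variable {n : ℕ}

noncomputable def numComponents (n : ℕ) (A : Finset (KEdge n)) : ℕ :=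
  Nat.card (graphOf n A).ConnectedComponent

lemma graphOf_mono {A B : Finset (KEdge n)} (h : A ⊆ B) : graphOf n A ≤ graphOf n B :=
  fun _ _ ⟨e, he, huv⟩ => ⟨e, h he, huv⟩

lemma graphOf_insert_le (e : KEdge n) (A : Finset (KEdge n)) :
    graphOf n (insert e A) ≤ graphOf n A ⊔ edge e.val.1 e.val.2 := by
  rintro u v ⟨f, hf, huv⟩
  rcases mem_insert.1 hf with rfl | hfA
  · right
    refine (edge_adj _ _ _ _).2 ⟨?_, (graphOf n {f}).ne_of_adj ⟨f, mem_singleton_self f, huv⟩⟩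
    rcases huv with h | h <;> simp [h]
  · exact Or.inl ⟨f, hfA, huv⟩

lemma numComponents_le_add_card (A D : Finset (KEdge n)) :
    numComponents n A ≤ numComponents n (A ∪ D) + D.card := by
  induction D using Finset.induction_on with
  | empty => simp
  | @insert e D he ih =>
    have hstep : numComponents n (A ∪ D) ≤ numComponents n (insert e (A ∪ D)) + 1 :=
      card_connectedComponent_le_succ_of_le_sup_edge (graphOf_mono (subset_insert e _))
        (graphOf_insert_le e _)
    rw [union_insert, card_insert_of_notMem he]
    omega

lemma numComponents_le (A : Finset (KEdge n)) : numComponents n A ≤ n := by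
  simpa [numComponents] using
    Nat.card_le_card_of_surjective (graphOf n A).connectedComponentMk fun c => c.exists_rep

lemma numComponents_pos (hn : 0 < n) (A : Finset (KEdge n)) : 0 < numComponents n A :=
  have : Nonempty (Fin n) := ⟨⟨0, hn⟩⟩
  Nat.card_pos

lemma numComponents_empty : numComponents n ∅ = n := by
  have hbij : Function.Bijective (graphOf n ∅).connectedComponentMk := by
    refine ⟨fun u v huv => ?_, fun c => c.exists_rep⟩
    obtain ⟨p⟩ := ConnectedComponent.exact huv
    cases p with
    | nil => rfl
    | cons h _ => obtain ⟨e, he, -⟩ := h; simp at he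
  simpa [numComponents] using (Nat.card_eq_of_bijective _ hbij).symm

def cut (S : Finset (Fin n)) : Finset (KEdge n) :=
  univ.filter fun e => ¬(e.val.1 ∈ S ↔ e.val.2 ∈ S)

lemma mem_cut {S : Finset (Fin n)} {e : KEdge n} :
    e ∈ cut S ↔ ¬(e.val.1 ∈ S ↔ e.val.2 ∈ S) := by
  simp [cut]

lemma card_mul_card_compl_le_card_cut (S : Finset (Fin n)) :
    S.card * Sᶜ.card ≤ (cut S).card := by
  rw [← card_product]
  refine card_le_card_of_surjOn
    (fun e => if e.val.1 ∈ S then (e.val.1, e.val.2) else (e.val.2, e.val.1)) ?_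
  rintro ⟨u, v⟩ huv
  simp only [coe_product, Set.mem_prod, mem_coe, mem_compl] at huv
  rcases lt_or_gt_of_ne (ne_of_mem_of_not_mem huv.1 huv.2) with h | h
  · exact ⟨⟨(u, v), h⟩, mem_cut.2 (by simp [huv]), by simp [huv]⟩
  · exact ⟨⟨(v, u), h⟩, mem_cut.2 (by simp [huv]), by simp [huv]⟩

lemma numComponents_compl_cut_le_two {S : Finset (Fin n)} {s t : Fin n} (hs : s ∈ S)
    (ht : t ∉ S) : numComponents n (cut S)ᶜ ≤ 2 := by
  set G := graphOf n (cut S)ᶜ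
  have hadj {u v : Fin n} (huv : u ≠ v) (hS : u ∈ S ↔ v ∈ S) : G.Reachable u v := by
    rcases lt_or_gt_of_ne huv with h | h
    · exact Adj.reachable ⟨⟨(u, v), h⟩, mem_compl.2 fun hc => mem_cut.1 hc hS, Or.inl rfl⟩
    · exact Adj.reachable ⟨⟨(v, u), h⟩, mem_compl.2 fun hc => mem_cut.1 hc hS.symm, Or.inr rfl⟩
  have hsurj : Function.Surjective
      fun b : Bool => G.connectedComponentMk (if b then s else t) := by
    intro c
    induction c using ConnectedComponent.ind with | h v => ?_
    by_cases hv : v ∈ S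
    · refine ⟨true, ConnectedComponent.sound ?_⟩
      by_cases hsv : s = v
      · exact hsv ▸ .rfl
      · exact hadj hsv (by simp [hs, hv])
    · refine ⟨false, ConnectedComponent.sound ?_⟩
      by_cases htv : t = v
      · exact htv ▸ .rfl
      · exact hadj htv (by simp [ht, hv])
  simpa [numComponents] using Nat.card_le_card_of_surjective _ hsurj

lemma cut_subset_compl {B : Finset (KEdge n)} {S : Finset (Fin n)}
    (hS : ∀ u v, (graphOf n B).Adj u v → u ∈ S → v ∈ S) : cut S ⊆ Bᶜ := fun e he =>
  mem_compl.2 fun heB =>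
    have hadj : (graphOf n B).Adj e.val.1 e.val.2 := ⟨e, heB, Or.inl rfl⟩
    mem_cut.1 he ⟨hS _ _ hadj, hS _ _ hadj.symm⟩

lemma add_numComponents_compl_le {A : Finset (KEdge n)} (hc : 2 ≤ numComponents n Aᶜ) :
    n + numComponents n Aᶜ ≤ A.card + 3 := by
  classical
  set G := graphOf n Aᶜ
  obtain ⟨s, t, hst⟩ : ∃ s t, ¬G.Reachable s t := by
    by_contra! h
    have : Subsingleton G.ConnectedComponent := Preconnected.subsingleton_connectedComponent h
    have : numComponents n Aᶜ ≤ 1 := Finite.card_le_one_iff_subsingleton.2 this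
    omega
  set S : Finset (Fin n) := univ.filter (G.Reachable s)
  have hs : s ∈ S := by simp [S]
  have ht : t ∉ S := by simpa [S] using hst
  have hcutA : cut S ⊆ A := by
    simpa using cut_subset_compl (B := Aᶜ) fun u v huv hu => by
      simp only [S, mem_filter, mem_univ, true_and] at hu ⊢
      exact hu.trans huv.reachable
  have hcut : n - 1 ≤ (cut S).card := by
    have hmul := card_mul_card_compl_le_card_cut S
    have hsum := card_add_card_compl S
    have hS : 1 ≤ S.card := card_pos.2 ⟨s, hs⟩
    have hSc : 1 ≤ Sᶜ.card := card_pos.2 ⟨t, mem_compl.2 ht⟩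
    rw [Fintype.card_fin] at hsum
    have : S.card + Sᶜ.card ≤ S.card * Sᶜ.card + 1 := by nlinarith
    omega
  have hrest := numComponents_le_add_card Aᶜ (A \ cut S)
  rw [show Aᶜ ∪ A \ cut S = (cut S)ᶜ by ext e; have := @hcutA e; simp; tauto,
    card_sdiff_of_subset hcutA] at hrest
  have := numComponents_compl_cut_le_two hs ht
  have := card_le_card hcutA
  omega

lemma numComponents_compl_eq_one {A : Finset (KEdge n)} (h : A.card + 2 ≤ n) :
    numComponents n Aᶜ = 1 := by
  have := numComponents_pos (by omega) Aᶜ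
  by_contra hne
  have := add_numComponents_compl_le (A := A) (by omega)
  omega

lemma numComponents_univ (hn : 2 ≤ n) : numComponents n univ = 1 := by
  simpa using numComponents_compl_eq_one (A := ∅) (by simpa using hn)

lemma card_kEdge : Fintype.card (KEdge n) = n.choose 2 := by
  show Fintype.card {p : Fin n × Fin n // p.1 < p.2} = _
  rw [Fintype.card_subtype, Fintype.card_product_filter_lt, Fintype.card_fin]

lemma bondRk_eq (hn : 2 ≤ n) (A : Finset (KEdge n)) :
    bondRk n A = A.card + 1 - numComponents n Aᶜ := by
  have := numComponents_le Aᶜ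
  show n - numComponents n Aᶜ + A.card - (n - numComponents n univ) = _
  rw [numComponents_univ hn]
  omega

lemma bondRk_univ (hn : 2 ≤ n) : bondRk n univ = n.choose 2 + 1 - n := by
  rw [bondRk_eq hn, compl_univ, numComponents_empty, card_univ, card_kEdge]

lemma bondRk_le_bondRk_univ (hn : 2 ≤ n) (A : Finset (KEdge n)) :
    bondRk n A ≤ bondRk n univ := by
  have hc := numComponents_le_add_card ∅ Aᶜ
  rw [empty_union, numComponents_empty] at hc
  have hcard := card_add_card_compl A
  rw [card_kEdge] at hcard
  rw [bondRk_eq hn, bondRk_univ hn]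
  omega

lemma bondRk_eq_card {A : Finset (KEdge n)} (h : A.card + 2 ≤ n) : bondRk n A = A.card := by
  rw [bondRk_eq (by omega), numComponents_compl_eq_one h, Nat.add_sub_cancel]

lemma sub_two_le_bondRk (hn : 2 ≤ n) {A : Finset (KEdge n)} (h : n - 1 ≤ A.card) :
    n - 2 ≤ bondRk n A := by
  rw [bondRk_eq hn]
  by_cases hc : 2 ≤ numComponents n Aᶜ
  · have := add_numComponents_compl_le hc
    omega
  · omega

lemma bondRk_eq_iff_card_eq {k : ℕ} (hk : k + 3 ≤ n) {A : Finset (KEdge n)} :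
    bondRk n A = k ↔ A.card = k := by
  rcases le_or_gt (A.card + 2) n with h | h
  · rw [bondRk_eq_card h]
  · have := sub_two_le_bondRk (by omega) (A := A) (by omega)
    omega

lemma coeff_flowPolyKn {k : ℕ} (hk : k + 3 ≤ n) :
    (flowPolyKn n).coeff (bondRk n univ - k) = (-1) ^ k * (n.choose 2).choose k := by
  have hk_le : k ≤ bondRk n univ := by
    obtain ⟨j, rfl⟩ : ∃ j, n = j + 3 := ⟨n - 3, by omega⟩
    rw [bondRk_univ (by omega), Nat.choose_two_add_one_sub (by omega),
      Nat.le_div_iff_mul_le two_pos, show j + 3 - 2 = j + 1 by omega,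
      show j + 3 - 1 = j + 2 by omega]
    nlinarith
  rw [flowPolyKn, Polynomial.coeff_sum_neg_one_pow_smul_X_pow_sub _
    (bondRk_le_bondRk_univ (by omega)) hk_le fun A => bondRk_eq_iff_card_eq hk, card_kEdge]

lemma natDegree_flowPolyKn_le : (flowPolyKn n).natDegree ≤ bondRk n univ :=
  Polynomial.natDegree_sum_smul_X_pow_sub_le _ _ _

end CompleteGraph

/-- For `n > 2`, with `N = n(n-1)/2` and `N' = (n-1)(n-2)/2`, the flow polynomial
of `K_n` is monic of degree `N'` and its coefficient of `x^{N'-k}` equals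
`(-1)^k C(N,k)` for all `0 ≤ k ≤ n-3`. -/
theorem flowPoly_completeGraph_major_coeffs (n : ℕ) (hn : 2 < n) :
    (flowPolyKn n).natDegree = (n - 1) * (n - 2) / 2 ∧
      (flowPolyKn n).Monic ∧
      ∀ k ≤ n - 3,
        (flowPolyKn n).coeff ((n - 1) * (n - 2) / 2 - k) =
          (-1 : ℝ) ^ k * ((n * (n - 1) / 2).choose k : ℝ) := by
  have hdeg : bondRk n univ = (n - 1) * (n - 2) / 2 := by
    rw [bondRk_univ (by omega), Nat.choose_two_add_one_sub (by omega)]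
  have hlead : (flowPolyKn n).coeff (bondRk n univ) = 1 := by
    simpa using coeff_flowPolyKn (k := 0) hn
  rw [← hdeg, ← Nat.choose_two_right]
  exact ⟨Polynomial.natDegree_eq_of_le_of_coeff_ne_zero natDegree_flowPolyKn_le
      (by simp [hlead]),
    Polynomial.monic_of_natDegree_le_of_coeff_eq_one _ natDegree_flowPolyKn_le hlead,
    fun k hk => coeff_flowPolyKn (by omega)⟩
end
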